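/- Let (φ,f) : G⋉X → H⋉Y be an equivariant essential equivalence between translation groupoids, and set K = Ker φ (which then acts freely on X). Then: the induced homomorphism φ̄ : G/K → H is injective; f descends to a well-defined φ̄-equivariant injective map f̄ : X/K → Y on the set of K-orbits; the induced equivariant map (φ̄, f̄) : (G/K)⋉(X/K) → H⋉Y is an essential equivalence; and (φ,f) is equal to the composite of the quotient equivariant map (π, p) : G⋉X → (G/K)⋉(X/K) followed by (φ̄, f̄). Thus every equivariant essential equivalence factors through a quotient by a freely acting normal subgroup followed by an essential equivalence with injective group homomorphism. -/
import Mathlib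


/-- An equivariant map `(φ, f) : G⋉X → H⋉Y` between translation groupoids is *fully
faithful* if for all `x, x' ∈ X` and `h ∈ H` with `h • f x = f x'` there is a unique
`g ∈ G` with `φ g = h` and `g • x = x'`. -/
def IsFullyFaithful {G H : Type*} [Group G] [Group H] {X Y : Type*}
    [MulAction G X] [MulAction H Y] (φ : G →* H) (f : X → Y) : Prop :=
  ∀ (x x' : X) (h : H), h • f x = f x' → ∃! g : G, φ g = h ∧ g • x = x'

/-- An equivariant map with underlying map `f : X → Y` into an `H`-set `Y` is
*essentially surjective* if every `y ∈ Y` is of the form `h • f x`. -/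
def IsEssSurj {H : Type*} [Group H] {X Y : Type*} [MulAction H Y] (f : X → Y) : Prop :=
  ∀ y : Y, ∃ (x : X) (h : H), h • f x = y

variable {G : Type*} [Group G] {X : Type*} [MulAction G X]
/-- The set `X/K` of `K`-orbits of the `G`-set `X`, for a subgroup `K ≤ G`. -/
def OrbitQuot (K : Subgroup G) (X : Type*) [MulAction G X] : Type _ :=
  Quotient (MulAction.orbitRel K X)

/-- The orbit map `X → X/K`. -/
def OrbitQuot.mk (K : Subgroup G) (x : X) : OrbitQuot K X :=
  Quotient.mk (MulAction.orbitRel K X) x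

/-- For `K ⊴ G` normal, the induced action of `G/K` on `X/K`: `(gK) • (K•x) = K•(g•x)`. -/
instance OrbitQuot.instMulAction (K : Subgroup G) [K.Normal] :
    MulAction (G ⧸ K) (OrbitQuot K X) where
  smul g x := Quotient.liftOn₂ g x (fun g x => OrbitQuot.mk K (g • x)) <| by
    intro g₁ x₁ g₂ x₂ hg hx
    have hg' : g₁⁻¹ * g₂ ∈ K := QuotientGroup.leftRel_apply.mp hg
    have hx' : x₁ ∈ MulAction.orbit K x₂ := hx
    obtain ⟨k, hk⟩ := hx'
    apply Quotient.sound
    show g₁ • x₁ ∈ MulAction.orbit K (g₂ • x₂)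
    refine ⟨⟨g₁ * ((k : G) * (g₁⁻¹ * g₂)⁻¹) * g₁⁻¹,
      Subgroup.Normal.conj_mem inferInstance _ (K.mul_mem k.2 (K.inv_mem hg')) g₁⟩, ?_⟩
    show (g₁ * ((k : G) * (g₁⁻¹ * g₂)⁻¹) * g₁⁻¹) • g₂ • x₂ = g₁ • x₁
    have hk' : (k : G) • x₂ = x₁ := hk
    rw [← hk', ← mul_smul, ← mul_smul]
    congr 1
    group
  one_smul := by
    rintro ⟨x⟩
    exact congrArg (OrbitQuot.mk K) (one_smul G x)
  mul_smul := by
    rintro ⟨a⟩ ⟨b⟩ ⟨x⟩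
    exact congrArg (OrbitQuot.mk K) (mul_smul a b x)

/-- Every equivariant essential equivalence `(φ, f) : G⋉X → H⋉Y` factors as the
quotient map `G⋉X → (G/K)⋉(X/K)` for the freely acting normal subgroup `K = Ker φ`,
followed by an essential equivalence `(φ̄, f̄) : (G/K)⋉(X/K) → H⋉Y` whose group
homomorphism `φ̄` is injective and whose underlying map `f̄` is injective. -/
theorem stmt_7 {H : Type*} [Group H] {Y : Type*} [MulAction H Y]
    (φ : G →* H) (f : X → Y)
    (hf : ∀ (g : G) (x : X), f (g • x) = φ g • f x)
    (hff : IsFullyFaithful φ f) (hes : IsEssSurj (H := H) f) :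
    -- the kernel of φ acts freely on X
    (∀ (k : φ.ker) (x : X), (k : G) • x = x → k = 1)
    -- the induced homomorphism φ̄ : G/Ker φ → H is injective
    ∧ Function.Injective (QuotientGroup.kerLift φ)
    -- f descends to a map f̄ on the set of Ker φ-orbits, which is injective,
    -- φ̄-equivariant, and together with φ̄ gives an essential equivalence through
    -- which (φ, f) factors via the quotient equivariant map (π, p)
    ∧ ∃ fbar : OrbitQuot φ.ker X → Y,
        (∀ x : X, fbar (OrbitQuot.mk φ.ker x) = f x)
        ∧ Function.Injective fbar
        ∧ (∀ (g : G ⧸ φ.ker) (z : OrbitQuot φ.ker X),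
            fbar (g • z) = QuotientGroup.kerLift φ g • fbar z)
        ∧ IsFullyFaithful (QuotientGroup.kerLift φ) fbar
        ∧ IsEssSurj (H := H) fbar
        -- the composite of the quotient map with (φ̄, f̄) is (φ, f):
        ∧ (∀ g : G, QuotientGroup.kerLift φ (QuotientGroup.mk' φ.ker g) = φ g)
        ∧ (∀ (g : G) (x : X),
            OrbitQuot.mk φ.ker (g • x)
              = QuotientGroup.mk' φ.ker g • OrbitQuot.mk φ.ker x) := by
  have hfree : ∀ (k : φ.ker) (x : X), (k : G) • x = x → k = 1 := by
    intro k x hk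
    obtain ⟨g, ⟨-, -⟩, hu⟩ := hff x x 1 (one_smul _ _)
    have h1 : (k : G) = g := hu _ ⟨k.2, hk⟩
    have h2 : (1 : G) = g := hu _ ⟨map_one φ, one_smul _ _⟩
    exact Subtype.ext (h1.trans h2.symm)
  have hconst : ∀ x₁ x₂ : X, MulAction.orbitRel φ.ker X x₁ x₂ → f x₁ = f x₂ := by
    intro x₁ x₂ h
    obtain ⟨k, hk⟩ := h
    have : f ((k : G) • x₂) = f x₂ := by rw [hf, k.2, one_smul]
    rw [← hk]; exact this
  refine ⟨hfree, QuotientGroup.kerLift_injective φ, Quotient.lift f hconst, fun x => rfl,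
    ?_, ?_, ?_, ?_, fun g => rfl, fun g x => rfl⟩
  · rintro ⟨x₁⟩ ⟨x₂⟩ h
    obtain ⟨g, ⟨hg1, hg2⟩, -⟩ := hff x₂ x₁ 1 (by simpa using h.symm)
    exact Quotient.sound ⟨⟨g, hg1⟩, hg2⟩
  · rintro ⟨g⟩ ⟨x⟩
    exact hf g x
  · rintro ⟨x⟩ ⟨x'⟩ h hh
    obtain ⟨g, ⟨hg1, hg2⟩, hu⟩ := hff x x' h hh
    refine ⟨QuotientGroup.mk g, ⟨hg1, Quotient.sound ⟨1, by simpa using hg2.symm⟩⟩, ?_⟩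
    rintro ⟨g'⟩ ⟨hg'1, hg'2⟩
    obtain ⟨k, hk⟩ := Quotient.exact hg'2
    have hφ : φ ((k : G)⁻¹ * g') = h := by
      rw [map_mul, map_inv, k.2, inv_one, one_mul]; exact hg'1
    have hk' : (k : G) • x' = g' • x := hk
    have hs : ((k : G)⁻¹ * g') • x = x' := by
      rw [mul_smul, ← hk', inv_smul_smul]
    have := hu _ ⟨hφ, hs⟩
    refine Quotient.sound (QuotientGroup.leftRel_apply.mpr ?_)
    rw [← this]
    have : g'⁻¹ * ((k:G)⁻¹ * g') = g'⁻¹ * (k:G)⁻¹ * g' := by group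
    rw [this]
    exact Subgroup.Normal.conj_mem' inferInstance _ (φ.ker.inv_mem k.2) g'
  · intro y
    obtain ⟨x, h, hx⟩ := hes y
    exact ⟨OrbitQuot.mk φ.ker x, h, hx⟩
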